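/- arXiv:2502.00493 — 2 statements merged into one kernel-verified Lean document; each statement's English description precedes it below -/
import Mathlib

section
/- Let H be a complex Hilbert space and let Z be an accretive operator in H with domain dom Z ⊆ H such that the range of Z + I (the map x ↦ Z x + x on dom Z) is all of H. Then: (a) ‖Z x + x‖ ≥ ‖x‖ for all x ∈ dom Z, so Z + I is injective and its inverse (Z + I)⁻¹ is an everywhere-defined bounded operator on H of norm at most 1; (b) there is a unique bounded operator C : H → H (the Cayley transform of Z) satisfying C(Z x + x) = Z x − x for all x ∈ dom Z, and ‖C‖ ≤ 1; (c) the operator C + I is a compact operator on H if and only if dom Z = H and Z is a compact operator on H. -/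
/-!
Since `‖Z x + x‖² = ‖Z x‖² + 2 Re⟪x, Z x⟫ + ‖x‖²` and `‖Z x - x‖² = ‖Z x‖² - 2 Re⟪x, Z x⟫ + ‖x‖²`,
accretivity makes `Z + I` injective with an inverse of norm at most `1`, and
`C = 1 - 2 (Z + I)⁻¹` a contraction.

Part (c) only uses the identities `(C + 1) (Z x + x) = 2 Z x` and `(1 - C) (Z x + x) = 2 x`.
If `Z` is compact, then so is `C + 1 = 2 Z (Z + I)⁻¹`. Conversely, if `C + 1` is compact, then
`1 - C = 2 - (C + 1)` is injective, hence invertible by the Fredholm alternative; its range, which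
lies in `dom`, is then all of `H`, and `Z = (C + 1) (1 - C)⁻¹` on `dom` is compact.
-/

open Function RCLike
open scoped InnerProductSpace

theorem IsCompactOperator.isUnit_algebraMap_sub_of_injective {𝕜 X : Type*}
    [NontriviallyNormedField 𝕜] [NormedAddCommGroup X] [NormedSpace 𝕜 X] [CompleteSpace X]
    {T : X →L[𝕜] X} {μ : 𝕜} (hT : IsCompactOperator T) (hμ : μ ≠ 0)
    (hinj : Injective (algebraMap 𝕜 (X →L[𝕜] X) μ - T)) :
    IsUnit (algebraMap 𝕜 (X →L[𝕜] X) μ - T) := by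
  refine (hT.hasEigenvalue_or_mem_resolventSet hμ).resolve_left fun hev => ?_
  obtain ⟨v, hv, hv0⟩ := hev.exists_hasEigenvector
  refine hv0 (hinj ?_)
  rw [Module.End.mem_eigenspace_iff] at hv
  simpa [sub_eq_zero] using hv.symm

def LinearMap.IsCayleyTransform {𝕜 M : Type*} [Semiring 𝕜] [AddCommGroup M] [Module 𝕜 M]
    [TopologicalSpace M] {dom : Submodule 𝕜 M} (Z : dom →ₗ[𝕜] M) (C : M →L[𝕜] M) : Prop :=
  ∀ x : dom, C (Z x + x) = Z x - x

namespace LinearMap.IsCayleyTransform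

variable {𝕜 X : Type*} [NontriviallyNormedField 𝕜] [NormedAddCommGroup X] [NormedSpace 𝕜 X]
  {dom : Submodule 𝕜 X} {Z : dom →ₗ[𝕜] X} {C : X →L[𝕜] X}

theorem unique (hsurj : Surjective fun x : dom => Z x + (x : X)) {C' : X →L[𝕜] X}
    (hC : Z.IsCayleyTransform C) (hC' : Z.IsCayleyTransform C') : C = C' := by
  ext u
  obtain ⟨x, rfl⟩ := hsurj u
  rw [hC x, hC' x]

variable (hC : Z.IsCayleyTransform C)
include hC

theorem add_one_apply_add_self (x : dom) : (C + 1) (Z x + x) = (2 : 𝕜) • Z x := by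
  rw [_root_.add_apply, hC x, one_apply_eq_self]
  module

theorem one_sub_apply_add_self (x : dom) : (1 - C) (Z x + x) = (2 : 𝕜) • (x : X) := by
  rw [_root_.sub_apply, hC x, one_apply_eq_self]
  module

theorem isCompactOperator_add_one (R : X →L[𝕜] dom) (hR : ∀ u, Z (R u) + R u = u)
    (hZ : IsCompactOperator fun x : dom => Z x) : IsCompactOperator ⇑(C + 1) := by
  suffices h : ⇑(C + 1) = (2 : 𝕜) • ((fun x : dom => Z x) ∘ ⇑R) from h ▸ (hZ.comp_clm R).smul _
  funext u
  conv_lhs => rw [← hR u]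
  exact hC.add_one_apply_add_self (R u)

theorem eq_top_of_surjective_one_sub (hsurj : Surjective fun x : dom => Z x + (x : X))
    (hsurj' : Surjective ⇑(1 - C)) : dom = ⊤ := by
  refine Submodule.eq_top_iff'.mpr fun v => ?_
  obtain ⟨u, rfl⟩ := hsurj' v
  obtain ⟨x, rfl⟩ := hsurj u
  rw [hC.one_sub_apply_add_self x]
  exact dom.smul_mem _ x.2

theorem isCompactOperator_of_isUnit_one_sub (hsurj : Surjective fun x : dom => Z x + (x : X))
    (hK : IsCompactOperator ⇑(C + 1)) (hU : IsUnit (1 - C)) :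
    IsCompactOperator fun x : dom => Z x := by
  set V : X →L[𝕜] X := ↑hU.unit⁻¹
  have hV : ∀ v, (1 - C) (V v) = v := DFunLike.congr_fun hU.mul_val_inv
  suffices h : (fun x : dom => Z x) = ⇑(C + 1) ∘ ⇑(V ∘L dom.subtypeL) from
    h ▸ hK.comp_clm (V ∘L dom.subtypeL)
  funext x
  obtain ⟨y, hy⟩ : ∃ y : dom, Z y + y = V x := hsurj (V x)
  have hxy : x = (2 : 𝕜) • y := by
    ext
    rw [← hV x, ← hy, hC.one_sub_apply_add_self y, Submodule.coe_smul]
  calc Z x = (2 : 𝕜) • Z y := by rw [hxy, map_smul]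
    _ = (C + 1) (V x) := by rw [← hy, hC.add_one_apply_add_self y]

variable [NeZero (2 : 𝕜)]

theorem injective_one_sub (hsurj : Surjective fun x : dom => Z x + (x : X)) :
    Injective ⇑(1 - C) := by
  refine (injective_iff_map_eq_zero _).mpr fun u hu => ?_
  obtain ⟨x, rfl⟩ := hsurj u
  rw [hC.one_sub_apply_add_self x, smul_eq_zero_iff_right two_ne_zero,
    ZeroMemClass.coe_eq_zero] at hu
  simp [hu]

theorem isUnit_one_sub [CompleteSpace X] (hsurj : Surjective fun x : dom => Z x + (x : X))
    (hK : IsCompactOperator ⇑(C + 1)) : IsUnit (1 - C) := by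
  have hsub : algebraMap 𝕜 (X →L[𝕜] X) 2 - (C + 1) = 1 - C := by
    rw [Algebra.algebraMap_eq_smul_one, two_smul]
    abel
  rw [← hsub]
  exact hK.isUnit_algebraMap_sub_of_injective two_ne_zero (hsub ▸ hC.injective_one_sub hsurj)

theorem isCompactOperator_add_one_iff [CompleteSpace X] (R : X →L[𝕜] dom)
    (hR : ∀ u, Z (R u) + R u = u) :
    IsCompactOperator ⇑(C + 1) ↔ dom = ⊤ ∧ IsCompactOperator fun x : dom => Z x := by
  have hsurj : Surjective fun x : dom => Z x + (x : X) := fun u => ⟨R u, hR u⟩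
  refine ⟨fun hK => ?_, fun ⟨_, hZ⟩ => hC.isCompactOperator_add_one R hR hZ⟩
  have hU := hC.isUnit_one_sub hsurj hK
  exact ⟨hC.eq_top_of_surjective_one_sub hsurj
      (ContinuousLinearMap.isUnit_iff_bijective.mp hU).2,
    hC.isCompactOperator_of_isUnit_one_sub hsurj hK hU⟩

end LinearMap.IsCayleyTransform

section InnerProduct

variable {𝕜 E : Type*} [RCLike 𝕜] [NormedAddCommGroup E] [InnerProductSpace 𝕜 E]

theorem norm_le_norm_add_of_re_inner_nonneg {x z : E} (h : 0 ≤ re ⟪x, z⟫_𝕜) :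
    ‖x‖ ≤ ‖z + x‖ := by
  have hadd := norm_add_sq (𝕜 := 𝕜) z x
  rw [inner_re_symm] at h
  exact (pow_le_pow_iff_left₀ (norm_nonneg _) (norm_nonneg _) two_ne_zero).mp
    (by nlinarith [sq_nonneg ‖z‖])

theorem norm_sub_le_norm_add_of_re_inner_nonneg {x z : E} (h : 0 ≤ re ⟪x, z⟫_𝕜) :
    ‖z - x‖ ≤ ‖z + x‖ := by
  have hsub := norm_sub_sq (𝕜 := 𝕜) z x
  have hadd := norm_add_sq (𝕜 := 𝕜) z x
  rw [inner_re_symm] at h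
  exact (pow_le_pow_iff_left₀ (norm_nonneg _) (norm_nonneg _) two_ne_zero).mp (by linarith)

def LinearMap.IsAccretive {dom : Submodule 𝕜 E} (Z : dom →ₗ[𝕜] E) : Prop :=
  ∀ x : dom, 0 ≤ re ⟪(x : E), Z x⟫_𝕜

namespace LinearMap.IsAccretive

variable {dom : Submodule 𝕜 E} {Z : dom →ₗ[𝕜] E} (hZ : Z.IsAccretive)
  (hsurj : Surjective fun x : dom => Z x + (x : E))
include hZ

theorem norm_le_norm_add_self (x : dom) : ‖(x : E)‖ ≤ ‖Z x + x‖ :=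
  norm_le_norm_add_of_re_inner_nonneg (hZ x)

theorem norm_sub_self_le_norm_add_self (x : dom) : ‖Z x - x‖ ≤ ‖Z x + x‖ :=
  norm_sub_le_norm_add_of_re_inner_nonneg (hZ x)

theorem injective_add_self : Injective fun x : dom => Z x + (x : E) := by
  intro x y hxy
  have h := hZ.norm_le_norm_add_self (x - y)
  rw [map_sub, Submodule.coe_sub, sub_add_sub_comm, sub_eq_zero.mpr hxy, norm_zero,
    norm_le_zero_iff, ← Submodule.coe_sub, ZeroMemClass.coe_eq_zero] at h
  exact sub_eq_zero.mp h

noncomputable def addSelfEquiv : dom ≃ₗ[𝕜] E :=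
  LinearEquiv.ofBijective (Z + dom.subtype) ⟨hZ.injective_add_self, hsurj⟩

theorem add_self_addSelfEquiv_symm_apply (u : E) :
    Z ((hZ.addSelfEquiv hsurj).symm u) + (hZ.addSelfEquiv hsurj).symm u = u :=
  (hZ.addSelfEquiv hsurj).apply_symm_apply u

noncomputable def resolvent : E →L[𝕜] dom :=
  (hZ.addSelfEquiv hsurj).symm.toLinearMap.mkContinuous 1 fun u => by
    rw [one_mul]
    conv_rhs => rw [← hZ.add_self_addSelfEquiv_symm_apply hsurj u]
    exact hZ.norm_le_norm_add_self _

theorem add_self_resolvent_apply (u : E) :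
    Z (hZ.resolvent hsurj u) + hZ.resolvent hsurj u = u :=
  hZ.add_self_addSelfEquiv_symm_apply hsurj u

theorem resolvent_apply_add_self (x : dom) : hZ.resolvent hsurj (Z x + x) = x :=
  (hZ.addSelfEquiv hsurj).symm_apply_apply x

theorem norm_resolvent_le : ‖hZ.resolvent hsurj‖ ≤ 1 :=
  LinearMap.mkContinuous_norm_le _ zero_le_one _

noncomputable def cayley : E →L[𝕜] E :=
  1 - (2 : 𝕜) • dom.subtypeL ∘L hZ.resolvent hsurj

theorem isCayleyTransform_cayley : Z.IsCayleyTransform (hZ.cayley hsurj) := by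
  intro x
  simp only [cayley, _root_.sub_apply, one_apply_eq_self, _root_.smul_apply,
    ContinuousLinearMap.comp_apply, hZ.resolvent_apply_add_self, Submodule.coe_subtypeL,
    Submodule.subtype_apply]
  module

theorem norm_cayley_le : ‖hZ.cayley hsurj‖ ≤ 1 := by
  refine ContinuousLinearMap.opNorm_le_bound _ zero_le_one fun u => ?_
  obtain ⟨x, rfl⟩ := hsurj u
  rw [hZ.isCayleyTransform_cayley hsurj x, one_mul]
  exact hZ.norm_sub_self_le_norm_add_self x

end LinearMap.IsAccretive

end InnerProduct

/-- Let `Z` be an accretive operator in a complex Hilbert space `H` with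
domain `dom ⊆ H` such that the range of `Z + I` is all of `H` (an m-accretive operator).
Then:
(a) `‖Z x + x‖ ≥ ‖x‖` for all `x ∈ dom`, so `Z + I` is injective and its inverse is an
    everywhere-defined bounded operator of norm at most `1`;
(b) there is a unique bounded operator `C : H → H` (the Cayley transform of `Z`) with
    `C (Z x + x) = Z x - x` for all `x ∈ dom`, and `‖C‖ ≤ 1`;
(c) `C + I` is a compact operator on `H` if and only if `dom = H` and `Z` is a compact
    operator on `H`. -/
theorem stmt_3 {H : Type*} [NormedAddCommGroup H] [InnerProductSpace ℂ H] [CompleteSpace H]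
    (dom : Submodule ℂ H) (Z : dom →ₗ[ℂ] H)
    (hacc : ∀ x : dom, 0 ≤ (inner ℂ (x : H) (Z x) : ℂ).re)
    (hsurj : ∀ u : H, ∃ x : dom, Z x + (x : H) = u) :
    -- (a)
    ((∀ x : dom, ‖(x : H)‖ ≤ ‖Z x + (x : H)‖) ∧
      (∀ x y : dom, Z x + (x : H) = Z y + (y : H) → x = y) ∧
      (∃ R : H →L[ℂ] H, ‖R‖ ≤ 1 ∧ ∀ x : dom, R (Z x + (x : H)) = (x : H))) ∧
    -- (b)
    ((∃ C : H →L[ℂ] H, (∀ x : dom, C (Z x + (x : H)) = Z x - (x : H)) ∧ ‖C‖ ≤ 1 ∧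
      (∀ C' : H →L[ℂ] H, (∀ x : dom, C' (Z x + (x : H)) = Z x - (x : H)) → C' = C))) ∧
    -- (c)
    (∀ C : H →L[ℂ] H, (∀ x : dom, C (Z x + (x : H)) = Z x - (x : H)) →
      (IsCompactOperator ⇑(C + 1) ↔
        (dom = ⊤ ∧ IsCompactOperator fun x : dom => Z x))) := by
  have hZ : Z.IsAccretive := hacc
  have hcayley := hZ.isCayleyTransform_cayley hsurj
  have hRnorm : ‖dom.subtypeL ∘L hZ.resolvent hsurj‖ ≤ 1 :=
    calc ‖dom.subtypeL ∘L hZ.resolvent hsurj‖ ≤ ‖dom.subtypeL‖ * ‖hZ.resolvent hsurj‖ :=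
          ContinuousLinearMap.opNorm_comp_le _ _
      _ ≤ 1 := mul_le_one₀ dom.norm_subtypeL_le (ContinuousLinearMap.opNorm_nonneg _)
        (hZ.norm_resolvent_le hsurj)
  exact ⟨⟨hZ.norm_le_norm_add_self, hZ.injective_add_self, dom.subtypeL ∘L hZ.resolvent hsurj,
      hRnorm, fun x => congrArg Subtype.val (hZ.resolvent_apply_add_self hsurj x)⟩,
    ⟨hZ.cayley hsurj, hcayley, hZ.norm_cayley_le hsurj,
      fun C' hC' => LinearMap.IsCayleyTransform.unique hsurj hC' hcayley⟩,
    fun C hC => LinearMap.IsCayleyTransform.isCompactOperator_add_one_iff hC _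
      (hZ.add_self_resolvent_apply hsurj)⟩
end

section
/- Let A be a closed, densely defined, symmetric operator in a complex Hilbert space X, let (H, Γ₀, Γ₁) be a boundary triple for its adjoint A*, let Z be a densely defined accretive operator in H, and let A_Z be the restriction of A* to dom A_Z = {y ∈ dom A* : Γ₀ y ∈ dom Z and Z Γ₀ y = i Γ₁ y}. Then A_Z is self-adjoint (A_Z coincides with its adjoint) if and only if the Hilbert-space adjoint Z* of Z satisfies Z* = −Z. -/
/-- An operator in a complex Hilbert space `H` is accretive if `Re ⟪Z h, h⟫ ≥ 0` on its
domain (the real part is the same in both inner-product conventions). -/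
def LinearPMap.Accretive {H : Type*} [NormedAddCommGroup H] [InnerProductSpace ℂ H]
    (Z : H →ₗ.[ℂ] H) : Prop :=
  ∀ h : Z.domain, 0 ≤ (inner ℂ (h : H) (Z h) : ℂ).re

/-!
Green's identity, tested against the graph of `A_Z`, shows that `(g, A* g)` lies in the graph of
`A_Z*` exactly when `(Γ₀ g, -i Γ₁ g)` lies in the graph of `Z*`. Since `A ⊆ A_Z` (both boundary
maps vanish on `dom A`), `A_Z*` is a restriction of `A*`, so `A_Z* = A_{-Z*}`. Surjectivity of
`(Γ₀, Γ₁)` makes `T ↦ A_T` injective, hence `A_Z* = A_Z` if and only if `-Z* = Z`.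
-/

open scoped InnerProductSpace LinearPMap

namespace LinearPMap

section Graph

variable {R E F : Type*} [Ring R] [AddCommGroup E] [Module R E] [AddCommGroup F] [Module R F]

theorem mem_graph_iff_exists_apply_eq (T : E →ₗ.[R] F) (x : E) (y : F) :
    (x, y) ∈ T.graph ↔ ∃ hx : x ∈ T.domain, T ⟨x, hx⟩ = y := by
  simp only [mem_graph_iff, Subtype.exists, exists_and_left, exists_eq_left]

theorem mem_graph_neg_iff (T : E →ₗ.[R] F) (x : E) (y : F) :
    (x, y) ∈ (-T).graph ↔ (x, -y) ∈ T.graph := by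
  simp only [mem_graph_iff_exists_apply_eq, neg_domain, neg_apply, neg_eq_iff_eq_neg]

end Graph

section Adjoint

variable {𝕜 E F : Type*} [RCLike 𝕜] [NormedAddCommGroup E] [InnerProductSpace 𝕜 E]
  [NormedAddCommGroup F] [InnerProductSpace 𝕜 F] [CompleteSpace E]

theorem mem_adjoint_graph_iff {T : E →ₗ.[𝕜] F} (hT : Dense (T.domain : Set E)) (x : F) (y : E) :
    (x, y) ∈ T†.graph ↔ ∀ a b, (a, b) ∈ T.graph → ⟪b, x⟫_𝕜 = ⟪a, y⟫_𝕜 := by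
  simp only [adjoint_graph_eq_graph_adjoint hT, Submodule.mem_adjoint_iff, sub_eq_zero]

theorem adjoint_le_adjoint {S T : E →ₗ.[𝕜] F} (hS : Dense (S.domain : Set E)) (h : S ≤ T) :
    T† ≤ S† := by
  refine IsFormalAdjoint.le_adjoint hS fun y x => ?_
  rw [h.2 (y := ⟨y, h.1 y.2⟩) rfl]
  exact (adjoint_isFormalAdjoint (hS.mono h.1)).symm _ x

end Adjoint

end LinearPMap

open LinearPMap Complex

section BoundaryTriple

variable {X H : Type*} [NormedAddCommGroup X] [InnerProductSpace ℂ X] [CompleteSpace X]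
  [NormedAddCommGroup H] [InnerProductSpace ℂ H]

structure IsBoundaryTriple (A : X →ₗ.[ℂ] X) (Γ₀ Γ₁ : A†.domain →ₗ[ℂ] H) : Prop where
  surjective : ∀ h₀ h₁ : H, ∃ f : A†.domain, Γ₀ f = h₀ ∧ Γ₁ f = h₁
  green : ∀ f g : A†.domain,
    ⟪A† f, (g : X)⟫_ℂ - ⟪(f : X), A† g⟫_ℂ = ⟪Γ₁ f, Γ₀ g⟫_ℂ - ⟪Γ₀ f, Γ₁ g⟫_ℂ

variable {A : X →ₗ.[ℂ] X}

/-- The graph of the restriction `A_T` of `A*` to `{f : Γ₀ f ∈ dom T, T Γ₀ f = i Γ₁ f}`. -/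
def boundaryGraph (Γ₀ Γ₁ : A†.domain →ₗ[ℂ] H) (T : H →ₗ.[ℂ] H) :
    Set (X × X) :=
  {p | ∃ f : A†.domain, (f : X) = p.1 ∧ A† f = p.2 ∧ (Γ₀ f, I • Γ₁ f) ∈ T.graph}

variable {Γ₀ Γ₁ : A†.domain →ₗ[ℂ] H}

theorem mk_mem_boundaryGraph_iff (T : H →ₗ.[ℂ] H) (f : A†.domain) :
    ((f : X), A† f) ∈ boundaryGraph Γ₀ Γ₁ T ↔ (Γ₀ f, I • Γ₁ f) ∈ T.graph := by
  refine ⟨?_, fun hf => ⟨f, rfl, rfl, hf⟩⟩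
  rintro ⟨f', hf', -, hT⟩
  rwa [← Subtype.ext hf']

namespace IsBoundaryTriple

variable (hΓ : IsBoundaryTriple A Γ₀ Γ₁)
include hΓ

theorem forall_boundary_iff (P : H → H → Prop) :
    (∀ f : A†.domain, P (Γ₀ f) (I • Γ₁ f)) ↔ ∀ h k, P h k := by
  refine ⟨fun hP h k => ?_, fun hP f => hP _ _⟩
  obtain ⟨f, rfl, hf⟩ := hΓ.surjective h (-(I • k))
  simpa [hf, smul_smul] using hP f

theorem boundary_eq_zero_of_forall {f : A†.domain}
    (hf : ∀ g : A†.domain, ⟪Γ₁ f, Γ₀ g⟫_ℂ = ⟪Γ₀ f, Γ₁ g⟫_ℂ) : Γ₀ f = 0 ∧ Γ₁ f = 0 := by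
  obtain ⟨g₀, hΓ₀g₀, hΓ₁g₀⟩ := hΓ.surjective 0 (Γ₀ f)
  obtain ⟨g₁, hΓ₀g₁, hΓ₁g₁⟩ := hΓ.surjective (Γ₁ f) 0
  have h₀ := hf g₀
  have h₁ := hf g₁
  rw [hΓ₀g₀, hΓ₁g₀, inner_zero_right, eq_comm, inner_self_eq_zero] at h₀
  rw [hΓ₀g₁, hΓ₁g₁, inner_zero_right, inner_self_eq_zero] at h₁
  exact ⟨h₀, h₁⟩

theorem boundary_eq_zero_of_mem_domain (hA : A ≤ A†) (hdense : Dense (A.domain : Set X))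
    (f : A.domain) : Γ₀ ⟨f, hA.1 f.2⟩ = 0 ∧ Γ₁ ⟨f, hA.1 f.2⟩ = 0 := by
  refine hΓ.boundary_eq_zero_of_forall fun g => sub_eq_zero.1 ?_
  rw [← hΓ.green, ← hA.2 rfl, ← inner_conj_symm, ← adjoint_isFormalAdjoint hdense g f,
    inner_conj_symm, sub_self]

theorem graph_subset_boundaryGraph (hA : A ≤ A†) (hdense : Dense (A.domain : Set X))
    (T : H →ₗ.[ℂ] H) : (A.graph : Set (X × X)) ⊆ boundaryGraph Γ₀ Γ₁ T := by
  rintro ⟨x, y⟩ hxy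
  obtain ⟨f, rfl, rfl⟩ := A.mem_graph_iff.1 hxy
  obtain ⟨h₀, h₁⟩ := hΓ.boundary_eq_zero_of_mem_domain hA hdense f
  refine ⟨⟨f, hA.1 f.2⟩, rfl, (hA.2 rfl).symm, ?_⟩
  rw [h₀, h₁, smul_zero]
  exact T.graph.zero_mem

theorem le_of_graph_eq_boundaryGraph (hA : A ≤ A†) (hdense : Dense (A.domain : Set X))
    {T : H →ₗ.[ℂ] H} {B : X →ₗ.[ℂ] X} (hB : (B.graph : Set (X × X)) = boundaryGraph Γ₀ Γ₁ T) :
    A ≤ B :=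
  le_of_le_graph fun _ hp => by
    rw [← SetLike.mem_coe, hB]
    exact hΓ.graph_subset_boundaryGraph hA hdense T hp

theorem inner_boundary_eq_iff (f g : A†.domain) :
    ⟪I • Γ₁ f, Γ₀ g⟫_ℂ = ⟪Γ₀ f, -(I • Γ₁ g)⟫_ℂ ↔ ⟪A† f, (g : X)⟫_ℂ = ⟪(f : X), A† g⟫_ℂ := by
  have key : ⟪I • Γ₁ f, Γ₀ g⟫_ℂ - ⟪Γ₀ f, -(I • Γ₁ g)⟫_ℂ
      = -I * (⟪A† f, (g : X)⟫_ℂ - ⟪(f : X), A† g⟫_ℂ) := by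
    rw [hΓ.green, inner_smul_left, inner_neg_right, inner_smul_right, conj_I]
    ring
  rw [← sub_eq_zero, key, mul_eq_zero, sub_eq_zero, neg_eq_zero]
  simp only [I_ne_zero, false_or]

theorem mk_mem_adjoint_graph_iff [CompleteSpace H] (hA : A ≤ A†)
    (hdense : Dense (A.domain : Set X)) {T : H →ₗ.[ℂ] H} (hT : Dense (T.domain : Set H))
    {B : X →ₗ.[ℂ] X}
    (hB : (B.graph : Set (X × X)) = boundaryGraph Γ₀ Γ₁ T) (g : A†.domain) :
    ((g : X), A† g) ∈ B†.graph ↔ (Γ₀ g, -(I • Γ₁ g)) ∈ T†.graph := by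
  have hBdense : Dense (B.domain : Set X) :=
    hdense.mono (hΓ.le_of_graph_eq_boundaryGraph hA hdense hB).1
  rw [mem_adjoint_graph_iff hBdense, mem_adjoint_graph_iff hT]
  calc (∀ a b, (a, b) ∈ B.graph → ⟪b, (g : X)⟫_ℂ = ⟪a, A† g⟫_ℂ)
      ↔ ∀ f : A†.domain, (Γ₀ f, I • Γ₁ f) ∈ T.graph →
          ⟪A† f, (g : X)⟫_ℂ = ⟪(f : X), A† g⟫_ℂ := by
        simp only [← SetLike.mem_coe, hB]
        refine ⟨fun h f hf => h _ _ ((mk_mem_boundaryGraph_iff T f).2 hf), ?_⟩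
        rintro h _ _ ⟨f, rfl, rfl, hf⟩
        exact h f hf
    _ ↔ ∀ f : A†.domain, (Γ₀ f, I • Γ₁ f) ∈ T.graph →
          ⟪I • Γ₁ f, Γ₀ g⟫_ℂ = ⟪Γ₀ f, -(I • Γ₁ g)⟫_ℂ :=
        forall_congr' fun f => imp_congr_right fun _ => (hΓ.inner_boundary_eq_iff f g).symm
    _ ↔ ∀ h k, (h, k) ∈ T.graph → ⟪k, Γ₀ g⟫_ℂ = ⟪h, -(I • Γ₁ g)⟫_ℂ :=
        hΓ.forall_boundary_iff fun h k => (h, k) ∈ T.graph → ⟪k, Γ₀ g⟫_ℂ = ⟪h, -(I • Γ₁ g)⟫_ℂ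

theorem adjoint_graph_eq_boundaryGraph [CompleteSpace H] (hA : A ≤ A†)
    (hdense : Dense (A.domain : Set X)) {T : H →ₗ.[ℂ] H} (hT : Dense (T.domain : Set H))
    {B : X →ₗ.[ℂ] X}
    (hB : (B.graph : Set (X × X)) = boundaryGraph Γ₀ Γ₁ T) :
    (B†.graph : Set (X × X)) = boundaryGraph Γ₀ Γ₁ (-T†) := by
  ext ⟨x, y⟩
  refine ⟨fun hxy => ?_, ?_⟩
  · have hBA : B† ≤ A† :=
      adjoint_le_adjoint hdense (hΓ.le_of_graph_eq_boundaryGraph hA hdense hB)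
    obtain ⟨g, rfl, rfl⟩ := A†.mem_graph_iff.1 (le_graph_of_le hBA hxy)
    rw [mk_mem_boundaryGraph_iff, mem_graph_neg_iff]
    exact (hΓ.mk_mem_adjoint_graph_iff hA hdense hT hB g).1 hxy
  · rintro ⟨g, rfl, rfl, hg⟩
    exact (hΓ.mk_mem_adjoint_graph_iff hA hdense hT hB g).2 ((mem_graph_neg_iff _ _ _).1 hg)

theorem le_of_boundaryGraph_subset {S T : H →ₗ.[ℂ] H}
    (h : boundaryGraph Γ₀ Γ₁ S ⊆ boundaryGraph Γ₀ Γ₁ T) : S ≤ T := by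
  refine le_of_le_graph fun ⟨u, v⟩ huv => ?_
  refine (hΓ.forall_boundary_iff fun u v => (u, v) ∈ S.graph → (u, v) ∈ T.graph).1
    (fun f hf => ?_) u v huv
  exact (mk_mem_boundaryGraph_iff T f).1 (h ((mk_mem_boundaryGraph_iff S f).2 hf))

theorem boundaryGraph_inj {S T : H →ₗ.[ℂ] H} :
    boundaryGraph Γ₀ Γ₁ S = boundaryGraph Γ₀ Γ₁ T ↔ S = T :=
  ⟨fun h => le_antisymm (hΓ.le_of_boundaryGraph_subset h.le)
    (hΓ.le_of_boundaryGraph_subset h.ge), fun h => h ▸ rfl⟩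

end IsBoundaryTriple

end BoundaryTriple

theorem stmt_9_general {X H : Type*} [NormedAddCommGroup X] [InnerProductSpace ℂ X] [CompleteSpace X]
    [NormedAddCommGroup H] [InnerProductSpace ℂ H] [CompleteSpace H]
    (A : X →ₗ.[ℂ] X)
    (hdense : Dense (A.domain : Set X))
    (hsym : ∀ f g : A.domain, (inner ℂ (A f) (g : X) : ℂ) = (inner ℂ (f : X) (A g) : ℂ))
    (Γ₀ Γ₁ : A.adjoint.domain →ₗ[ℂ] H)
    (hsurj : ∀ h₀ h₁ : H, ∃ f : A.adjoint.domain, Γ₀ f = h₀ ∧ Γ₁ f = h₁)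
    (hGreen : ∀ f g : A.adjoint.domain,
      (inner ℂ (A.adjoint f) (g : X) : ℂ) - (inner ℂ (f : X) (A.adjoint g) : ℂ)
        = (inner ℂ (Γ₁ f) (Γ₀ g) : ℂ) - (inner ℂ (Γ₀ f) (Γ₁ g) : ℂ))
    (Z : H →ₗ.[ℂ] H) (hZdense : Dense (Z.domain : Set H))
    (B : X →ₗ.[ℂ] X)
    (hB : ∀ x y : X, (x, y) ∈ B.graph ↔
      ∃ f : A.adjoint.domain, (f : X) = x ∧ A.adjoint f = y ∧
        ∃ hf : Γ₀ f ∈ Z.domain, Z ⟨Γ₀ f, hf⟩ = Complex.I • Γ₁ f) :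
    B.adjoint = B ↔ Z.adjoint = -Z := by
  have hΓ : IsBoundaryTriple A Γ₀ Γ₁ := ⟨hsurj, hGreen⟩
  have hA : A ≤ A† := IsFormalAdjoint.le_adjoint hdense hsym
  have hBZ : (B.graph : Set (X × X)) = boundaryGraph Γ₀ Γ₁ Z := by
    ext ⟨x, y⟩
    simp only [SetLike.mem_coe, hB, boundaryGraph, Set.mem_ofPred_eq,
      mem_graph_iff_exists_apply_eq]
  calc B† = B ↔ (B†.graph : Set (X × X)) = B.graph :=
        ⟨fun h => by rw [h], fun h => eq_of_eq_graph (SetLike.coe_injective h)⟩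
    _ ↔ boundaryGraph Γ₀ Γ₁ (-Z†) = boundaryGraph Γ₀ Γ₁ Z := by
        rw [hΓ.adjoint_graph_eq_boundaryGraph hA hdense hZdense hBZ, hBZ]
    _ ↔ Z† = -Z := hΓ.boundaryGraph_inj.trans neg_eq_iff_eq_neg

/-- Let `A` be a closed, densely defined, symmetric operator in a complex
Hilbert space `X`, let `(H, Γ₀, Γ₁)` be a boundary triple for `A*`, let `Z` be a densely
defined accretive operator in `H`, and let `A_Z` (here `B`) be the restriction of `A*` to
`{y ∈ dom A* : Γ₀ y ∈ dom Z ∧ Z Γ₀ y = i Γ₁ y}`.  Then `A_Z` is self-adjoint if and only if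
the Hilbert-space adjoint `Z*` of `Z` satisfies `Z* = -Z`. -/
theorem stmt_9 {X H : Type*} [NormedAddCommGroup X] [InnerProductSpace ℂ X] [CompleteSpace X]
    [NormedAddCommGroup H] [InnerProductSpace ℂ H] [CompleteSpace H]
    (A : X →ₗ.[ℂ] X)
    (hdense : Dense (A.domain : Set X))
    (hsym : ∀ f g : A.domain, (inner ℂ (A f) (g : X) : ℂ) = (inner ℂ (f : X) (A g) : ℂ))
    (hclosed : IsClosed (A.graph : Set (X × X)))
    (Γ₀ Γ₁ : A.adjoint.domain →ₗ[ℂ] H)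
    (hsurj : ∀ h₀ h₁ : H, ∃ f : A.adjoint.domain, Γ₀ f = h₀ ∧ Γ₁ f = h₁)
    (hGreen : ∀ f g : A.adjoint.domain,
      (inner ℂ (A.adjoint f) (g : X) : ℂ) - (inner ℂ (f : X) (A.adjoint g) : ℂ)
        = (inner ℂ (Γ₁ f) (Γ₀ g) : ℂ) - (inner ℂ (Γ₀ f) (Γ₁ g) : ℂ))
    (Z : H →ₗ.[ℂ] H) (hZ : Z.Accretive) (hZdense : Dense (Z.domain : Set H))
    (B : X →ₗ.[ℂ] X)
    (hB : ∀ x y : X, (x, y) ∈ B.graph ↔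
      ∃ f : A.adjoint.domain, (f : X) = x ∧ A.adjoint f = y ∧
        ∃ hf : Γ₀ f ∈ Z.domain, Z ⟨Γ₀ f, hf⟩ = Complex.I • Γ₁ f) :
    B.adjoint = B ↔ Z.adjoint = -Z :=
  stmt_9_general A hdense hsym Γ₀ Γ₁ hsurj hGreen Z hZdense B hB
end
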